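/- arXiv:1107.4257 — 2 statements merged into one kernel-verified Lean document; each statement's English description precedes it below -/
import Mathlib

section
/- For 0 < ϑ ≤ π/2, the equation sin(s) = s·sin(ϑ)/ϑ has exactly the three real solutions s = 0, s = ϑ, and s = -ϑ. -/
/-!
Dividing by `s ≠ 0`, the equation says `sinc s = sinc ϑ`, and `sinc` is even. On `(0, π]` it is
strictly decreasing, since `sin` is strictly concave there and vanishes at `0`. Beyond `π` it is
below `1 / π`, while Jordan's inequality keeps `sinc ϑ ≥ 2 / π` for `ϑ ≤ π / 2`.
-/

open Real Set

namespace Real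

lemma sinc_abs (x : ℝ) : sinc |x| = sinc x := by
  rcases abs_choice x with h | h <;> rw [h]
  exact sinc_neg x

lemma sinc_strictAntiOn : StrictAntiOn sinc (Ioc 0 π) := by
  intro x hx y hy hxy
  have hx0 : x ≠ 0 := hx.1.ne'
  have hy0 : y ≠ 0 := hy.1.ne'
  have := strictConcaveOn_sin_Icc.secant_strict_mono (a := 0) ⟨le_rfl, pi_pos.le⟩
    (Ioc_subset_Icc_self hx) (Ioc_subset_Icc_self hy) hx0 hy0 hxy
  simpa only [sin_zero, sub_zero, ← sinc_of_ne_zero hx0, ← sinc_of_ne_zero hy0] using this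

lemma two_div_pi_le_sinc {x : ℝ} (hx : 0 < x) (hx' : x ≤ π / 2) : 2 / π ≤ sinc x := by
  rw [sinc_of_ne_zero hx.ne', le_div_iff₀ hx]
  exact mul_le_sin hx.le hx'

lemma sinc_lt_two_div_pi {x : ℝ} (hx : π / 2 < |x|) : sinc x < 2 / π :=
  calc sinc x ≤ |x|⁻¹ := sinc_le_inv_abs (abs_pos.1 (pi_div_two_pos.trans hx))
    _ < (π / 2)⁻¹ := inv_strictAnti₀ pi_div_two_pos hx
    _ = 2 / π := inv_div π 2

lemma sinc_eq_sinc_iff {x y : ℝ} (hx : 0 < x) (hx' : x ≤ π / 2) (hy : 0 < y) :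
    sinc y = sinc x ↔ y = x := by
  refine ⟨fun h ↦ ?_, fun h ↦ h ▸ rfl⟩
  rcases le_or_gt y π with hyπ | hπy
  · exact sinc_strictAntiOn.injOn ⟨hy, hyπ⟩ ⟨hx, hx'.trans (half_le_self pi_pos.le)⟩ h
  · have := sinc_lt_two_div_pi (x := y) (by rw [abs_of_pos hy]; linarith [pi_pos])
    linarith [two_div_pi_le_sinc hx hx']

end Real

theorem sine_equation_solutions (ϑ : ℝ) (h0 : 0 < ϑ) (hπ : ϑ ≤ Real.pi / 2) :
    {s : ℝ | Real.sin s = s * Real.sin ϑ / ϑ} = {0, ϑ, -ϑ} := by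
  ext s
  simp only [mem_ofPred_eq, mem_insert_iff, mem_singleton_iff]
  rcases eq_or_ne s 0 with rfl | hs
  · simp
  have hsinc : sin s = s * sin ϑ / ϑ ↔ sinc |s| = sinc ϑ := by
    rw [sinc_abs, sinc_of_ne_zero hs, sinc_of_ne_zero h0.ne', div_eq_iff hs, mul_comm s,
      mul_div_right_comm]
  rw [hsinc, sinc_eq_sinc_iff h0 hπ (abs_pos.2 hs), abs_eq h0.le]
  simp [hs]
end

section
/- Let 0 < ϑ < π. If a is a finite trigonometric polynomial (or an L² function on the circle) satisfying χ_{[-ϑ,ϑ]} ∗ a = 2 sin(ϑ) a, then a(φ) = c₋₁ e^{-iφ} + c₁ e^{iφ} for some constants c₋₁, c₁ ∈ ℂ. -/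
/-!
Each character `φ ↦ exp (i j φ)` is an eigenfunction of convolution with `χ_{[-ϑ,ϑ]}`, with
eigenvalue `2 ϑ sinc (j ϑ)`. Since distinct characters are linearly independent (Dedekind), the
equation forces `c j = 0` unless `ϑ sinc (j ϑ) = sin ϑ`. For `0 < ϑ < π` this fails at `j = 0`
because `sin ϑ < ϑ`, and at `|j| ≥ 2` because `|sin (j ϑ)| < |j| sin ϑ`.
-/

open Real
open Complex (I)
open scoped Complex

lemma abs_sin_add_lt {x y t : ℝ} (hsin : 0 < sin x) (ht : 0 < t)
    (hy : |sin y| ≤ t * sin x) : |sin (y + x)| < (t + 1) * sin x := by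
  have hcos : |cos x| < 1 := by
    rw [← sq_lt_one_iff_abs_lt_one]
    nlinarith [sin_sq_add_cos_sq x]
  calc |sin (y + x)| ≤ |sin y| * |cos x| + |cos y| * sin x := by
        rw [sin_add, ← abs_mul, ← abs_of_pos hsin, ← abs_mul, abs_of_pos hsin]
        exact abs_add_le _ _
    _ ≤ t * sin x * |cos x| + 1 * sin x := by
        gcongr
        exact abs_cos_le_one y
    _ < (t + 1) * sin x := by nlinarith [mul_pos ht hsin]

lemma abs_sin_nat_mul_lt {x : ℝ} (hsin : 0 < sin x) {n : ℕ} (hn : 2 ≤ n) :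
    |sin (n * x)| < n * sin x := by
  induction n, hn using Nat.le_induction with
  | base =>
    have := abs_sin_add_lt (y := x) hsin one_pos (by rw [one_mul, abs_of_pos hsin])
    convert this using 3 <;> push_cast <;> ring
  | succ n hn ih =>
    push_cast
    rw [add_one_mul]
    exact abs_sin_add_lt hsin (by positivity) ih.le

lemma abs_sin_int_mul_lt {x : ℝ} (hsin : 0 < sin x) {j : ℤ} (hj : 2 ≤ |j|) :
    |sin (j * x)| < |j| * sin x := by
  have h := abs_sin_nat_mul_lt hsin (n := j.natAbs) <| by
    rw [Int.abs_eq_natAbs] at hj; exact_mod_cast hj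
  rcases Int.natAbs_eq j with hj' | hj' <;> rw [hj'] <;> push_cast <;> simpa using h

lemma eq_one_or_eq_neg_one_of_mul_sinc_eq_sin {ϑ : ℝ} (h0 : 0 < ϑ) (hπ : ϑ < π) {j : ℤ}
    (h : ϑ * sinc (j * ϑ) = sin ϑ) : j = 1 ∨ j = -1 := by
  by_contra hj
  obtain rfl | hj0 := eq_or_ne j 0
  · simp only [Int.cast_zero, zero_mul, sinc_zero, mul_one] at h
    exact (sin_lt h0).ne' h
  have hjϑ : (j : ℝ) * ϑ ≠ 0 := mul_ne_zero (by exact_mod_cast hj0) h0.ne'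
  rw [sinc_of_ne_zero hjϑ, mul_div_assoc', div_eq_iff hjϑ] at h
  have hsin_mul : sin (j * ϑ) = j * sin ϑ := by
    apply mul_right_cancel₀ h0.ne'; linarith
  have hsin := sin_pos_of_pos_of_lt_pi h0 hπ
  have hlt := abs_sin_int_mul_lt hsin (j := j) <| by
    rcases abs_cases j with ⟨h, _⟩ | ⟨h, _⟩ <;> omega
  rw [hsin_mul, abs_mul, abs_of_pos hsin, Int.cast_abs] at hlt
  exact lt_irrefl _ hlt

lemma integral_cexp_I_mul_symm (r φ ϑ : ℝ) :
    ∫ ψ in (φ - ϑ)..(φ + ϑ), cexp (I * r * ψ) = 2 * ϑ * sinc (r * ϑ) * cexp (I * r * φ) := by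
  obtain rfl | hr := eq_or_ne r 0
  · simp; ring
  obtain rfl | hϑ := eq_or_ne ϑ 0
  · simp
  have hc : I * r ≠ 0 := by simp [hr]
  have hϑ' : (ϑ : ℂ) ≠ 0 := by exact_mod_cast hϑ
  have hr' : (r : ℂ) ≠ 0 := by exact_mod_cast hr
  rw [integral_exp_mul_complex hc, sinc_of_ne_zero (mul_ne_zero hr hϑ)]
  push_cast
  rw [Complex.sin, div_eq_iff hc]
  field_simp
  simp only [mul_add, mul_sub, Complex.exp_add, Complex.exp_sub, Complex.exp_neg, Complex.I_sq]
  field_simp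
  ring

lemma linearIndependent_cexp_I_int_mul :
    LinearIndependent ℂ (fun (j : ℤ) (φ : ℝ) => cexp (I * j * φ)) := by
  let χ : ℤ → (Multiplicative ℝ →* ℂ) := fun j =>
    { toFun := fun φ => cexp (I * j * φ.toAdd)
      map_one' := by simp
      map_mul' := fun φ ψ => by simp [mul_add, Complex.exp_add] }
  have hχ : Function.Injective χ := by
    intro j k hjk
    by_contra hne
    -- at `φ = π / (j - k)` the two characters differ by the factor `exp (π i) = -1`
    have hd : (j : ℂ) - k ≠ 0 := sub_ne_zero.mpr (by exact_mod_cast hne)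
    have h := DFunLike.congr_fun hjk (Multiplicative.ofAdd (π / (j - k)))
    simp only [MonoidHom.coe_mk, OneHom.coe_mk, χ, toAdd_ofAdd] at h
    have h1 := congrArg (· / cexp (I * k * ↑(π / (j - k)))) h
    simp only [div_self (Complex.exp_ne_zero _), ← Complex.exp_sub] at h1
    have h2 : I * j * ↑(π / (j - k)) - I * k * ↑(π / (j - k)) = π * I := by
      push_cast
      field_simp
    rw [h2, Complex.exp_pi_mul_I] at h1
    norm_num at h1
  exact (linearIndependent_monoidHom (Multiplicative ℝ) ℂ).comp χ hχ

lemma integral_symm_sum_cexp (s : Finset ℤ) (c : ℤ → ℂ) (ϑ φ : ℝ) :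
    ∫ ψ in (φ - ϑ)..(φ + ϑ), ∑ j ∈ s, c j * cexp (I * j * ψ)
      = ∑ j ∈ s, c j * (2 * ϑ * sinc (j * ϑ)) * cexp (I * j * φ) := by
  rw [intervalIntegral.integral_finsetSum fun j _ => by
    apply Continuous.intervalIntegrable; fun_prop]
  refine Finset.sum_congr rfl fun j _ => ?_
  rw [intervalIntegral.integral_const_mul, mul_assoc]
  exact_mod_cast congrArg (c j * ·) (integral_cexp_I_mul_symm j φ ϑ)

lemma eq_zero_of_sum_cexp_eq_zero {s : Finset ℤ} {d : ℤ → ℂ}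
    (h : ∀ φ : ℝ, ∑ j ∈ s, d j * cexp (I * j * φ) = 0) : ∀ j ∈ s, d j = 0 :=
  linearIndependent_iff'.mp linearIndependent_cexp_I_int_mul s d <| funext fun φ => by
    simpa only [Finset.sum_apply, Pi.smul_apply, smul_eq_mul, Pi.zero_apply] using h φ

lemma eq_zero_of_integral_symm_eq_two_sin_mul {ϑ : ℝ} (h0 : 0 < ϑ) (hπ : ϑ < π)
    {s : Finset ℤ} {c : ℤ → ℂ}
    (heq : ∀ φ : ℝ, ∫ ψ in (φ - ϑ)..(φ + ϑ), ∑ j ∈ s, c j * cexp (I * j * ψ)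
      = 2 * sin ϑ * ∑ j ∈ s, c j * cexp (I * j * φ))
    {j : ℤ} (hj : j ∈ s) (hj_one : j ≠ 1) (hj_neg : j ≠ -1) : c j = 0 := by
  have hdiff : ∀ φ : ℝ,
      ∑ j ∈ s, c j * (2 * ϑ * sinc (j * ϑ) - 2 * sin ϑ : ℝ) * cexp (I * j * φ) = 0 := by
    intro φ
    have := heq φ
    rw [integral_symm_sum_cexp, Finset.mul_sum, ← sub_eq_zero, ← Finset.sum_sub_distrib] at this
    rw [← this]
    refine Finset.sum_congr rfl fun j _ => ?_
    push_cast
    ring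
  have hmult : ϑ * sinc (j * ϑ) ≠ sin ϑ := fun h =>
    (eq_one_or_eq_neg_one_of_mul_sinc_eq_sin h0 hπ h).elim hj_one hj_neg
  have hne : (2 * ϑ * sinc (j * ϑ) - 2 * sin ϑ : ℝ) ≠ 0 := fun h => hmult (by linarith)
  exact (mul_eq_zero.mp (eq_zero_of_sum_cexp_eq_zero hdiff j hj)).resolve_right
    (by exact_mod_cast hne)

lemma exists_sum_cexp_eq_of_eq_zero {s : Finset ℤ} {c : ℤ → ℂ}
    (h : ∀ j ∈ s, j ≠ 1 → j ≠ -1 → c j = 0) :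
    ∃ cm cp : ℂ, ∀ φ : ℝ,
      ∑ j ∈ s, c j * cexp (I * j * φ) = cm * cexp (-I * φ) + cp * cexp (I * φ) := by
  refine ⟨if -1 ∈ s then c (-1) else 0, if 1 ∈ s then c 1 else 0, fun φ => ?_⟩
  rw [← Finset.sum_subset (Finset.inter_subset_right (s₁ := {-1, 1})) ?_,
    ← Finset.sum_ite_mem, Finset.sum_pair (by decide)]
  · simp only [ite_mul, zero_mul]
    push_cast
    ring_nf
  · intro j hj hj'
    simp only [Finset.mem_inter, Finset.mem_insert, Finset.mem_singleton, not_and] at hj'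
    rw [h j hj (by grind) (by grind), zero_mul]

theorem kernel_characterization (ϑ : ℝ) (h0 : 0 < ϑ) (hϑ : ϑ < Real.pi)
    (N : ℕ) (c : ℤ → ℂ) (a : ℝ → ℂ)
    (ha : ∀ φ : ℝ, a φ = ∑ j ∈ Finset.Icc (-(N : ℤ)) (N : ℤ), c j * Complex.exp (Complex.I * j * φ))
    (heq : ∀ φ : ℝ, (∫ ψ in (φ - ϑ)..(φ + ϑ), a ψ) = 2 * Real.sin ϑ * a φ) :
    ∃ cm cp : ℂ, ∀ φ : ℝ,
      a φ = cm * Complex.exp (-Complex.I * φ) + cp * Complex.exp (Complex.I * φ) := by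
  simp only [ha] at heq
  obtain ⟨cm, cp, h⟩ := exists_sum_cexp_eq_of_eq_zero fun j hj =>
    eq_zero_of_integral_symm_eq_two_sin_mul h0 hϑ heq hj
  exact ⟨cm, cp, fun φ => (ha φ).trans (h φ)⟩
end
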